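/- Let I be a finite set and (·,·): ℤ^I × ℤ^I → ℤ a symmetric bilinear form. Let d, d_1, …, d_r ∈ ℕ^I and let ε_{i_1}, …, ε_{i_s} be coordinate vectors, and let n_1,…,n_r, n'_1,…,n'_s be positive integers with d = Σ_{p=1}^r n_p d_p + Σ_{q=1}^s n'_q ε_{i_q}. Assume (d,d) = 0, (d_p,d_{p'}) ≤ 0 for all p,p' (including p = p'), (d_p, ε_{i_q}) ≤ 0 for all p,q, (d, ε_{i_q}) ≤ 0 for all q, and (d, d_p) ≤ 0 for all p. Then: (i) (d_p, d_{p'}) = 0 for all p,p'; (ii) (d, d_p) = (d, ε_{i_q}) = (d_p, ε_{i_q}) = 0 for all p,q; and (iii) (d^re, d^re) = 0, where d^re = Σ_{q=1}^s n'_q ε_{i_q}. -/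
import Mathlib


open Classical
noncomputable section

/-- STATEMENT 10: Let `I` be a finite set and `B` a symmetric bilinear form on `ℤ^I`.
Let `d = Σ_p n_p d_p + Σ_q n'_q ε_{i_q}` with `d, d_p ∈ ℕ^I`, `ε_{i_q}` coordinate
vectors and `n_p, n'_q > 0`.  Assume `(d,d) = 0` and that all the pairings
`(d_p,d_{p'})`, `(d_p,ε_{i_q})`, `(d,ε_{i_q})`, `(d,d_p)` are `≤ 0`.  Then
(i) `(d_p,d_{p'}) = 0` for all `p,p'`; (ii) `(d,d_p) = (d,ε_{i_q}) = (d_p,ε_{i_q}) = 0`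
for all `p,q`; (iii) `(d^{re}, d^{re}) = 0` where `d^{re} = Σ_q n'_q ε_{i_q}`. -/
theorem statement10 (I : Type) [Fintype I] [DecidableEq I]
    (B : (I → ℤ) →ₗ[ℤ] (I → ℤ) →ₗ[ℤ] ℤ) (hB : ∀ x y, B x y = B y x)
    (r s : ℕ) (d : I → ℕ) (dp : Fin r → (I → ℕ)) (iq : Fin s → I)
    (n : Fin r → ℕ) (n' : Fin s → ℕ) (hn : ∀ p, 0 < n p) (hn' : ∀ q, 0 < n' q)
    (hdecomp : (fun i => (d i : ℤ)) =
      (∑ p, (n p : ℤ) • (fun i => (dp p i : ℤ))) + ∑ q, (n' q : ℤ) • Pi.single (iq q) 1)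
    (hiso : B (fun i => (d i : ℤ)) (fun i => (d i : ℤ)) = 0)
    (hpp' : ∀ p p', B (fun i => (dp p i : ℤ)) (fun i => (dp p' i : ℤ)) ≤ 0)
    (hpq : ∀ p q, B (fun i => (dp p i : ℤ)) (Pi.single (iq q) 1) ≤ 0)
    (hdq : ∀ q, B (fun i => (d i : ℤ)) (Pi.single (iq q) 1) ≤ 0)
    (hdp : ∀ p, B (fun i => (d i : ℤ)) (fun i => (dp p i : ℤ)) ≤ 0) :
    (∀ p p', B (fun i => (dp p i : ℤ)) (fun i => (dp p' i : ℤ)) = 0)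
    ∧ (∀ p, B (fun i => (d i : ℤ)) (fun i => (dp p i : ℤ)) = 0)
    ∧ (∀ q, B (fun i => (d i : ℤ)) (Pi.single (iq q) 1) = 0)
    ∧ (∀ p q, B (fun i => (dp p i : ℤ)) (Pi.single (iq q) 1) = 0)
    ∧ B (∑ q, (n' q : ℤ) • Pi.single (iq q) 1) (∑ q, (n' q : ℤ) • Pi.single (iq q) 1)
        = 0 := by
  set D : I → ℤ := fun i => (d i : ℤ) with hD
  set Dp : Fin r → (I → ℤ) := fun p i => (dp p i : ℤ) with hDp
  set E : Fin s → (I → ℤ) := fun q => Pi.single (iq q) 1 with hE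
  have key : ∀ (x : I → ℤ), (∀ p, B x (Dp p) ≤ 0) → (∀ q, B x (E q) ≤ 0) →
      B x D = 0 → (∀ p, B x (Dp p) = 0) ∧ (∀ q, B x (E q) = 0) := by
    intro x hx1 hx2 hx0
    have hexp : B x D = (∑ p, (n p : ℤ) * B x (Dp p)) + ∑ q, (n' q : ℤ) * B x (E q) := by
      rw [hdecomp, map_add, map_sum, map_sum]
      simp only [hDp, hE, map_smul, smul_eq_mul]
    rw [hexp] at hx0
    have h1 : ∀ p ∈ Finset.univ, (n p : ℤ) * B x (Dp p) ≤ 0 :=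
      fun p _ => mul_nonpos_of_nonneg_of_nonpos (by positivity) (hx1 p)
    have h2 : ∀ q ∈ Finset.univ, (n' q : ℤ) * B x (E q) ≤ 0 :=
      fun q _ => mul_nonpos_of_nonneg_of_nonpos (by positivity) (hx2 q)
    have hs1 : (∑ p, (n p : ℤ) * B x (Dp p)) ≤ 0 := Finset.sum_nonpos h1
    have hs2 : (∑ q, (n' q : ℤ) * B x (E q)) ≤ 0 := Finset.sum_nonpos h2
    have e1 : (∑ p, (n p : ℤ) * B x (Dp p)) = 0 := le_antisymm hs1 (by omega)
    have e2 : (∑ q, (n' q : ℤ) * B x (E q)) = 0 := le_antisymm hs2 (by omega)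
    rw [Finset.sum_eq_zero_iff_of_nonpos h1] at e1
    rw [Finset.sum_eq_zero_iff_of_nonpos h2] at e2
    constructor
    · intro p
      have := e1 p (Finset.mem_univ p)
      have hnp : (n p : ℤ) ≠ 0 := by exact_mod_cast (hn p).ne'
      exact (mul_eq_zero.1 this).resolve_left hnp
    · intro q
      have := e2 q (Finset.mem_univ q)
      have hnq : (n' q : ℤ) ≠ 0 := by exact_mod_cast (hn' q).ne'
      exact (mul_eq_zero.1 this).resolve_left hnq
  have hd := key D hdp hdq hiso
  have hp : ∀ p, (∀ p', B (Dp p) (Dp p') = 0) ∧ (∀ q, B (Dp p) (E q) = 0) := by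
    intro p
    exact key (Dp p) (hpp' p) (hpq p) (by rw [hB]; exact hd.1 p)
  refine ⟨fun p p' => (hp p).1 p', hd.1, hd.2, fun p q => (hp p).2 q, ?_⟩
  have hre : (∑ q, (n' q : ℤ) • E q) = D - ∑ p, (n p : ℤ) • Dp p := by
    rw [hdecomp]; simp only [hE, hDp]; ring
  rw [hre]
  simp only [map_sub, LinearMap.sub_apply]
  have h1 : B D (∑ p, (n p : ℤ) • Dp p) = 0 := by
    rw [map_sum]
    exact Finset.sum_eq_zero fun p _ => by
      rw [map_smul, smul_eq_mul, hd.1 p, mul_zero]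
  have h2 : B (∑ p, (n p : ℤ) • Dp p) D = 0 := by rw [hB]; exact h1
  have h3 : B (∑ p, (n p : ℤ) • Dp p) (∑ p, (n p : ℤ) • Dp p) = 0 := by
    have hz : ∀ p, B (Dp p) (∑ p', (n p' : ℤ) • Dp p') = 0 := fun p => by
      rw [map_sum]
      exact Finset.sum_eq_zero fun p' _ => by
        rw [map_smul, smul_eq_mul, (hp p).1 p', mul_zero]
    rw [map_sum]
    refine Finset.sum_eq_zero fun p _ => ?_
    rw [map_smul, smul_eq_mul, hB, hz p, mul_zero]
  rw [h1, h2, h3, hiso]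
  ring
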